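/- arXiv:2509.02005 — 8 statements merged into one kernel-verified Lean document; each statement's English description precedes it below -/
import Mathlib

section
/- Let H be a real Hilbert space, B : H → H an L-Lipschitz map with L > 0, and (x_k)_{k≥0} any sequence in H. Fix constants 0 < c₁ < c₂, an initial value λ₀ > 0, and a summable sequence (γ_k)_{k≥0} of nonnegative reals, and define λ_k for k ≥ 1 by the adaptive rule: λ_k = c₁‖x_{k−1} − x_k‖/‖B x_{k−1} − B x_k‖ if ‖B x_{k−1} − B x_k‖ > (c₂/λ_{k−1})‖x_{k−1} − x_k‖, and λ_k = (1 + γ_{k−1}) λ_{k−1} otherwise. Then the sequence (λ_k) converges, and λ_k ≥ min{c₁/L, λ₀} > 0 for all k ≥ 0. -/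
/-!
Each step of the rule either multiplies `λ` by `1 + γₖ` or resets it to `c₁‖Δx‖/‖ΔB‖`.
By the Lipschitz bound a reset never goes below `c₁ / L`, and since `c₁ < c₂` it never goes above
the previous `λ`; this gives the lower bound and `λₖ₊₁ ≤ (1 + γₖ) λₖ`. Dividing by the convergent
partial products `∏_{i<k} (1 + γᵢ)` then turns `λ` into a nonnegative antitone sequence.
-/

open Filter Topology Finset

theorem exists_tendsto_of_le_one_add_mul {a γ : ℕ → ℝ} (ha : ∀ k, 0 ≤ a k)
    (hγ : ∀ k, 0 ≤ γ k) (hγsum : Summable γ) (hstep : ∀ k, a (k + 1) ≤ (1 + γ k) * a k) :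
    ∃ l, Tendsto a atTop (𝓝 l) := by
  set P : ℕ → ℝ := fun k ↦ ∏ i ∈ range k, (1 + γ i)
  have hP_pos (k : ℕ) : 0 < P k := prod_pos fun i _ ↦ by linarith [hγ i]
  have hP_tendsto : Tendsto P atTop (𝓝 (∏' i, (1 + γ i))) :=
    (Real.multipliable_one_add_of_summable hγsum).tendsto_prod_tprod_nat
  have hanti : Antitone fun k ↦ a k / P k := by
    refine antitone_nat_of_succ_le fun k ↦ ?_
    have hγk : 0 < 1 + γ k := by linarith [hγ k]
    simp only [P, prod_range_succ]
    rw [div_le_div_iff₀ (mul_pos (hP_pos k) hγk) (hP_pos k)]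
    calc a (k + 1) * P k ≤ (1 + γ k) * a k * P k := by gcongr; exacts [(hP_pos k).le, hstep k]
      _ = a k * (P k * (1 + γ k)) := by ring
  have hbdd : BddBelow (Set.range fun k ↦ a k / P k) :=
    ⟨0, by rintro _ ⟨k, rfl⟩; exact div_nonneg (ha k) (hP_pos k).le⟩
  refine ⟨_, ((tendsto_atTop_ciInf hanti hbdd).mul hP_tendsto).congr fun k ↦ ?_⟩
  exact div_mul_cancel₀ _ (hP_pos k).ne'

section AdaptiveStep

/-- One step of the rule, with `d = ‖xₖ - xₖ₊₁‖`, `e = ‖B xₖ - B xₖ₊₁‖` and `g = γₖ`. -/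
noncomputable def adaptiveStep (c₁ c₂ lam d e g : ℝ) : ℝ :=
  if c₂ / lam * d < e then c₁ * d / e else (1 + g) * lam

variable {c₁ c₂ L lam d e g : ℝ}

lemma pos_of_div_mul_lt (hc₂ : 0 ≤ c₂) (hlam : 0 < lam) (hd : 0 ≤ d) (h : c₂ / lam * d < e) :
    0 < e :=
  (mul_nonneg (div_nonneg hc₂ hlam.le) hd).trans_lt h

lemma min_div_le_adaptiveStep (hc₁ : 0 ≤ c₁) (hc₂ : 0 ≤ c₂) (hL : 0 < L) (hlam : 0 < lam)
    (hd : 0 ≤ d) (he : e ≤ L * d) (hg : 0 ≤ g) :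
    min (c₁ / L) lam ≤ adaptiveStep c₁ c₂ lam d e g := by
  unfold adaptiveStep
  split_ifs with h
  · have he_pos := pos_of_div_mul_lt hc₂ hlam hd h
    refine (min_le_left _ _).trans ?_
    rw [div_le_div_iff₀ hL he_pos]
    calc c₁ * e ≤ c₁ * (L * d) := by gcongr
      _ = c₁ * d * L := by ring
  · exact (min_le_right _ _).trans (le_mul_of_one_le_left hlam.le (by linarith))

lemma adaptiveStep_le_one_add_mul (hc₁ : 0 ≤ c₁) (hc₁₂ : c₁ ≤ c₂) (hlam : 0 < lam) (hd : 0 ≤ d)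
    (hg : 0 ≤ g) :
    adaptiveStep c₁ c₂ lam d e g ≤ (1 + g) * lam := by
  unfold adaptiveStep
  split_ifs with h
  · have he_pos := pos_of_div_mul_lt (hc₁.trans hc₁₂) hlam hd h
    calc c₁ * d / e ≤ lam := by
          rw [div_le_iff₀ he_pos]
          calc c₁ * d ≤ c₂ * d := by gcongr
            _ = c₂ / lam * d * lam := by field_simp
            _ ≤ e * lam := by gcongr
            _ = lam * e := mul_comm _ _
      _ ≤ (1 + g) * lam := le_mul_of_one_le_left hlam.le (by linarith)
  · exact le_rfl

end AdaptiveStep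

theorem adaptive_stepsize_converges_and_bounded_below_general
    {H : Type*} [NormedAddCommGroup H]
    (B : H → H) (L : ℝ) (hL : 0 < L)
    (hLip : ∀ x y : H, ‖B x - B y‖ ≤ L * ‖x - y‖)
    (x : ℕ → H) (c₁ c₂ : ℝ) (hc₁ : 0 < c₁) (hc₁₂ : c₁ < c₂)
    (γ : ℕ → ℝ) (hγ : ∀ k, 0 ≤ γ k) (hγsum : Summable γ)
    (lam : ℕ → ℝ) (hlam0 : 0 < lam 0)
    (hrule : ∀ k : ℕ,
      lam (k + 1) =
        if (c₂ / lam k) * ‖x k - x (k + 1)‖ < ‖B (x k) - B (x (k + 1))‖ then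
          c₁ * ‖x k - x (k + 1)‖ / ‖B (x k) - B (x (k + 1))‖
        else (1 + γ k) * lam k) :
    (∃ l : ℝ, Tendsto lam atTop (nhds l)) ∧
      0 < min (c₁ / L) (lam 0) ∧ ∀ k : ℕ, min (c₁ / L) (lam 0) ≤ lam k := by
  have hmin_pos : 0 < min (c₁ / L) (lam 0) := lt_min (div_pos hc₁ hL) hlam0
  have hlower (k : ℕ) : min (c₁ / L) (lam 0) ≤ lam k := by
    induction k with
    | zero => exact min_le_right _ _
    | succ k ih =>
      rw [hrule k]
      refine (le_min (min_le_left _ _) ih).trans ?_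
      exact min_div_le_adaptiveStep hc₁.le (hc₁.trans hc₁₂).le hL (hmin_pos.trans_le ih)
        (norm_nonneg _) (hLip _ _) (hγ k)
  have hstep (k : ℕ) : lam (k + 1) ≤ (1 + γ k) * lam k := by
    rw [hrule k]
    exact adaptiveStep_le_one_add_mul hc₁.le hc₁₂.le (hmin_pos.trans_le (hlower k))
      (norm_nonneg _) (hγ k)
  refine ⟨?_, hmin_pos, hlower⟩
  exact exists_tendsto_of_le_one_add_mul (fun k ↦ (hmin_pos.trans_le (hlower k)).le) hγ hγsum hstep

/-- Lemma 3.2(1) of Hoai, as used in the paper: the adaptive step-size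
sequence converges and is bounded below by `min (c₁ / L) (lam 0) > 0`. -/
theorem adaptive_stepsize_converges_and_bounded_below
    {H : Type*} [NormedAddCommGroup H] [InnerProductSpace ℝ H]
    (B : H → H) (L : ℝ) (hL : 0 < L)
    (hLip : ∀ x y : H, ‖B x - B y‖ ≤ L * ‖x - y‖)
    (x : ℕ → H) (c₁ c₂ : ℝ) (hc₁ : 0 < c₁) (hc₁₂ : c₁ < c₂)
    (γ : ℕ → ℝ) (hγ : ∀ k, 0 ≤ γ k) (hγsum : Summable γ)
    (lam : ℕ → ℝ) (hlam0 : 0 < lam 0)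
    (hrule : ∀ k : ℕ,
      lam (k + 1) =
        if (c₂ / lam k) * ‖x k - x (k + 1)‖ < ‖B (x k) - B (x (k + 1))‖ then
          c₁ * ‖x k - x (k + 1)‖ / ‖B (x k) - B (x (k + 1))‖
        else (1 + γ k) * lam k) :
    (∃ l : ℝ, Tendsto lam atTop (nhds l)) ∧
      0 < min (c₁ / L) (lam 0) ∧ ∀ k : ℕ, min (c₁ / L) (lam 0) ≤ lam k :=
  adaptive_stepsize_converges_and_bounded_below_general B L hL hLip x c₁ c₂ hc₁ hc₁₂ γ hγ hγsum lam
    hlam0 hrule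
end

section
/- Let H be a real Hilbert space, B : H → H an L-Lipschitz map with L > 0, and (x_k)_{k≥0} any sequence in H. Fix constants 0 < c₁ < c₂, an initial value λ₀ > 0, and a summable sequence (γ_k)_{k≥0} of strictly positive reals, and define λ_k for k ≥ 1 by the adaptive rule: λ_k = c₁‖x_{k−1} − x_k‖/‖B x_{k−1} − B x_k‖ if ‖B x_{k−1} − B x_k‖ > (c₂/λ_{k−1})‖x_{k−1} − x_k‖, and λ_k = (1 + γ_{k−1}) λ_{k−1} otherwise. Then there exists a positive integer k̃ such that λ_{k+1} > λ_k for all k ≥ k̃. -/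
/-!
Each time the first branch of the rule fires, `λ` drops by at least the factor `c₂ / c₁ > 1`;
otherwise it grows by `1 + γ_k`. The growth factors have bounded product `∏ (1 + γ_k) ≤ exp (∑ γ_k)`,
and by Lipschitz continuity `λ_k ≥ min λ₀ (c₁ / L) > 0` throughout, so the first branch can fire only
finitely often. From then on `λ_{k+1} = (1 + γ_k) λ_k > λ_k`.
-/

theorem Nat.setOf_finite_of_count_le {p : ℕ → Prop} [DecidablePred p] {M : ℕ}
    (h : ∀ n, Nat.count p n ≤ M) : {n | p n}.Finite := by
  by_contra hinf
  obtain ⟨n, hn⟩ := Nat.surjective_count_of_infinite_setOfPred hinf (M + 1)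
  have := h n
  omega

theorem prod_range_one_add_le_exp_tsum {γ : ℕ → ℝ} (hγ : ∀ k, 0 ≤ γ k) (hγsum : Summable γ)
    (n : ℕ) : ∏ k ∈ Finset.range n, (1 + γ k) ≤ Real.exp (∑' k, γ k) :=
  (Real.prod_one_add_le_exp_sum _ hγ).trans
    (Real.exp_le_exp.2 (hγsum.sum_le_tsum _ fun k _ ↦ hγ k))

theorem mul_pow_count_le_mul_prod {u g : ℕ → ℝ} {r : ℝ} {p : ℕ → Prop} [DecidablePred p]
    (hr : 0 ≤ r) (hg : ∀ n, 0 ≤ g n) (hstep : ∀ n, u (n + 1) ≤ g n * u n)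
    (hshrink : ∀ n, p n → u (n + 1) * r ≤ g n * u n) (n : ℕ) :
    u n * r ^ Nat.count p n ≤ u 0 * ∏ k ∈ Finset.range n, g k := by
  induction n with
  | zero => simp
  | succ n ih =>
    have hstep' : u (n + 1) * r ^ Nat.count p (n + 1) ≤ g n * (u n * r ^ Nat.count p n) := by
      have hrpow : 0 ≤ r ^ Nat.count p n := pow_nonneg hr _
      rw [Nat.count_succ]
      split_ifs with hpn
      · calc u (n + 1) * r ^ (Nat.count p n + 1) = u (n + 1) * r * r ^ Nat.count p n := by ring
          _ ≤ g n * u n * r ^ Nat.count p n := mul_le_mul_of_nonneg_right (hshrink n hpn) hrpow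
          _ = g n * (u n * r ^ Nat.count p n) := by ring
      · rw [add_zero, ← mul_assoc]
        exact mul_le_mul_of_nonneg_right (hstep n) hrpow
    calc u (n + 1) * r ^ Nat.count p (n + 1) ≤ g n * (u n * r ^ Nat.count p n) := hstep'
      _ ≤ g n * (u 0 * ∏ k ∈ Finset.range n, g k) := mul_le_mul_of_nonneg_left ih (hg n)
      _ = u 0 * ∏ k ∈ Finset.range (n + 1), g k := by rw [Finset.prod_range_succ]; ring

theorem setOf_finite_of_mul_pow_count_le {u : ℕ → ℝ} {r ε C : ℝ} {p : ℕ → Prop}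
    [DecidablePred p] (hr : 1 < r) (hε : 0 < ε) (hu : ∀ n, ε ≤ u n)
    (h : ∀ n, u n * r ^ Nat.count p n ≤ C) : {n | p n}.Finite := by
  obtain ⟨M, hM⟩ := pow_unbounded_of_one_lt (C / ε) hr
  refine Nat.setOf_finite_of_count_le (M := M) fun n ↦ ?_
  by_contra! hlt
  have hpow : r ^ M ≤ r ^ Nat.count p n := pow_le_pow_right₀ hr.le hlt.le
  have : ε * r ^ Nat.count p n ≤ C :=
    (mul_le_mul_of_nonneg_right (hu n) (by positivity)).trans (h n)
  rw [div_lt_iff₀ hε] at hM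
  nlinarith

/-- The adaptive rule, with `a k` and `d k` standing for `‖x k - x (k + 1)‖` and
`‖B (x k) - B (x (k + 1))‖`. -/
def IsAdaptiveStepSize (c₁ c₂ : ℝ) (γ a d lam : ℕ → ℝ) : Prop :=
  ∀ k, lam (k + 1) = if c₂ / lam k * a k < d k then c₁ * a k / d k else (1 + γ k) * lam k

namespace IsAdaptiveStepSize

variable {c₁ c₂ L : ℝ} {γ a d lam : ℕ → ℝ} {k : ℕ}

theorem min_le (h : IsAdaptiveStepSize c₁ c₂ γ a d lam) (hL : 0 < L) (hc₁ : 0 < c₁)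
    (hc₂ : 0 ≤ c₂) (hlam0 : 0 < lam 0) (hγ : ∀ k, 0 ≤ γ k) (ha : ∀ k, 0 ≤ a k)
    (hd : ∀ k, d k ≤ L * a k) (k : ℕ) : min (lam 0) (c₁ / L) ≤ lam k := by
  induction k with
  | zero => exact min_le_left _ _
  | succ k ih =>
    have hlam : 0 < lam k := (lt_min hlam0 (div_pos hc₁ hL)).trans_le ih
    rw [h k]
    split_ifs with hshrink
    · have hdpos : 0 < d k := (mul_nonneg (div_nonneg hc₂ hlam.le) (ha k)).trans_lt hshrink
      refine (min_le_right _ _).trans ?_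
      rw [div_le_div_iff₀ hL hdpos]
      nlinarith [hd k]
    · nlinarith [hγ k]

theorem mul_div_lt_of_shrink (h : IsAdaptiveStepSize c₁ c₂ γ a d lam) (hc₁ : 0 < c₁)
    (hc₂ : 0 ≤ c₂) (hlam : 0 < lam k) (ha : 0 ≤ a k) (hshrink : c₂ / lam k * a k < d k) :
    lam (k + 1) * (c₂ / c₁) < lam k := by
  have hdpos : 0 < d k := (mul_nonneg (div_nonneg hc₂ hlam.le) ha).trans_lt hshrink
  have hshrink' : c₂ * a k < lam k * d k := by
    rwa [div_mul_eq_mul_div, div_lt_iff₀ hlam, mul_comm (d k)] at hshrink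
  calc lam (k + 1) * (c₂ / c₁) = c₂ * a k / d k := by
        rw [h k, if_pos hshrink]; field_simp
    _ < lam k := by rwa [div_lt_iff₀ hdpos]

theorem le_one_add_mul (h : IsAdaptiveStepSize c₁ c₂ γ a d lam) (hc₁ : 0 < c₁)
    (hc₁₂ : c₁ ≤ c₂) (hγ : 0 ≤ γ k) (hlam : 0 < lam k) (hlam' : 0 ≤ lam (k + 1)) (ha : 0 ≤ a k) :
    lam (k + 1) ≤ (1 + γ k) * lam k := by
  by_cases hshrink : c₂ / lam k * a k < d k
  · have hlt := h.mul_div_lt_of_shrink hc₁ (hc₁.le.trans hc₁₂) hlam ha hshrink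
    have : lam (k + 1) ≤ lam (k + 1) * (c₂ / c₁) :=
      le_mul_of_one_le_right hlam' ((one_le_div hc₁).2 hc₁₂)
    nlinarith
  · rw [h k, if_neg hshrink]

theorem mul_pow_count_le (h : IsAdaptiveStepSize c₁ c₂ γ a d lam) (hc₁ : 0 < c₁)
    (hc₁₂ : c₁ ≤ c₂) (hγ : ∀ k, 0 ≤ γ k) (hlam : ∀ k, 0 < lam k) (ha : ∀ k, 0 ≤ a k) (n : ℕ) :
    lam n * (c₂ / c₁) ^ Nat.count (fun k ↦ c₂ / lam k * a k < d k) n ≤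
      lam 0 * ∏ k ∈ Finset.range n, (1 + γ k) := by
  have hgrowth (k : ℕ) : 1 ≤ 1 + γ k := le_add_of_nonneg_right (hγ k)
  refine mul_pow_count_le_mul_prod (div_nonneg (hc₁.le.trans hc₁₂) hc₁.le)
    (fun k ↦ zero_le_one.trans (hgrowth k))
    (fun k ↦ h.le_one_add_mul hc₁ hc₁₂ (hγ k) (hlam k) (hlam (k + 1)).le (ha k))
    (fun k hshrink ↦ ?_) n
  calc lam (k + 1) * (c₂ / c₁) ≤ lam k :=
        (h.mul_div_lt_of_shrink hc₁ (hc₁.le.trans hc₁₂) (hlam k) (ha k) hshrink).le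
    _ ≤ (1 + γ k) * lam k := le_mul_of_one_le_left (hlam k).le (hgrowth k)

end IsAdaptiveStepSize

/-- Lemma 3.2(2) of Hoai, as used in the paper: with strictly positive
summable `γ`, the adaptive step-size sequence is eventually strictly
increasing. -/
theorem adaptive_stepsize_eventually_strictly_increasing
    {H : Type*} [NormedAddCommGroup H] [InnerProductSpace ℝ H]
    (B : H → H) (L : ℝ) (hL : 0 < L)
    (hLip : ∀ x y : H, ‖B x - B y‖ ≤ L * ‖x - y‖)
    (x : ℕ → H) (c₁ c₂ : ℝ) (hc₁ : 0 < c₁) (hc₁₂ : c₁ < c₂)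
    (γ : ℕ → ℝ) (hγ : ∀ k, 0 < γ k) (hγsum : Summable γ)
    (lam : ℕ → ℝ) (hlam0 : 0 < lam 0)
    (hrule : ∀ k : ℕ,
      lam (k + 1) =
        if (c₂ / lam k) * ‖x k - x (k + 1)‖ < ‖B (x k) - B (x (k + 1))‖ then
          c₁ * ‖x k - x (k + 1)‖ / ‖B (x k) - B (x (k + 1))‖
        else (1 + γ k) * lam k) :
    ∃ ktilde : ℕ, 0 < ktilde ∧ ∀ k : ℕ, ktilde ≤ k → lam k < lam (k + 1) := by
  classical
  have h : IsAdaptiveStepSize c₁ c₂ γ (fun k ↦ ‖x k - x (k + 1)‖)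
      (fun k ↦ ‖B (x k) - B (x (k + 1))‖) lam := hrule
  have hmin : 0 < min (lam 0) (c₁ / L) := lt_min hlam0 (div_pos hc₁ hL)
  have hlow := h.min_le hL hc₁ (hc₁.trans hc₁₂).le hlam0 (fun k ↦ (hγ k).le)
    (fun _ ↦ norm_nonneg _) (fun _ ↦ hLip _ _)
  have hlam (k : ℕ) : 0 < lam k := hmin.trans_le (hlow k)
  have hbound (n : ℕ) := (h.mul_pow_count_le hc₁ hc₁₂.le (fun k ↦ (hγ k).le) hlam
    (fun _ ↦ norm_nonneg _) n).trans (mul_le_mul_of_nonneg_left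
      (prod_range_one_add_le_exp_tsum (fun k ↦ (hγ k).le) hγsum n) hlam0.le)
  obtain ⟨N, hN⟩ := (setOf_finite_of_mul_pow_count_le ((one_lt_div hc₁).2 hc₁₂) hmin hlow
    hbound).bddAbove
  refine ⟨N + 1, N.succ_pos, fun k hk ↦ ?_⟩
  have hgrow : ¬ c₂ / lam k * ‖x k - x (k + 1)‖ < ‖B (x k) - B (x (k + 1))‖ :=
    fun hshrink ↦ by have := hN hshrink; omega
  rw [hrule k, if_neg hgrow]
  exact lt_mul_of_one_lt_left (hlam k) (lt_add_of_pos_right 1 (hγ k))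
end

section
/- Let δ ∈ ℝ, set λ = 1/(2|δ| + 2), and let B₂ be the 2×2 real rotation matrix with rows (0, −1) and (1, 0). Let M be the 6×6 real block matrix M = [[I₂ − λ(δ+2)B₂, λ(2δ+1)B₂, −λδB₂], [I₂, 0, 0], [0, I₂, 0]], where I₂ is the 2×2 identity. Then the characteristic polynomial of M equals (X³ − X²)² + λ²((δ+2)X² − (2δ+1)X + δ)² in ℝ[X]. -/
/-!
`M` is the block companion matrix of the matrix polynomial
`X³ I₂ - X² (I₂ - a B₂) - X (b B₂) + c B₂ = (X³ - X²) I₂ + (a X² - b X + c) B₂`,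
so its characteristic polynomial is the determinant of that `2 × 2` matrix, and
`det (p I₂ + q B₂) = p² + q²` because `B₂² = -I₂`. Here `a, b, c = λ(δ+2), λ(2δ+1), λδ`.
-/

open Polynomial Matrix

/-- The block companion matrix of `(I₂ - a B₂, b B₂, -c B₂)`, coordinates ordered
`x₁, y₁, x₂, y₂, x₃, y₃`. -/
def rotationCompanion {R : Type*} [Ring R] (a b c : R) : Matrix (Fin 6) (Fin 6) R :=
  !![1, a, 0, -b, 0, c;
     -a, 1, b, 0, -c, 0;
     1, 0, 0, 0, 0, 0;
     0, 1, 0, 0, 0, 0;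
     0, 0, 1, 0, 0, 0;
     0, 0, 0, 1, 0, 0]

theorem rotationCompanion_map {R S : Type*} [Ring R] [Ring S] (f : R →+* S) (a b c : R) :
    (rotationCompanion a b c).map f = rotationCompanion (f a) (f b) (f c) := by
  ext i j
  fin_cases i <;> fin_cases j <;> simp [rotationCompanion]

theorem det_scalar_sub_rotationCompanion {R : Type*} [CommRing R] (a b c x : R) :
    (scalar (Fin 6) x - rotationCompanion a b c).det =
      (x ^ 3 - x ^ 2) ^ 2 + (a * x ^ 2 - b * x + c) ^ 2 := by
  simp [rotationCompanion, det_succ_row_zero, Fin.sum_univ_succ, Fin.succAbove]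
  ring

theorem charpoly_rotationCompanion {R : Type*} [CommRing R] (a b c : R) :
    (rotationCompanion a b c).charpoly =
      (X ^ 3 - X ^ 2) ^ 2 + (C a * X ^ 2 - C b * X + C c) ^ 2 := by
  rw [charpoly, charmatrix, RingHom.mapMatrix_apply, rotationCompanion_map,
    det_scalar_sub_rotationCompanion]

/-- The characteristic polynomial of the GFRB fixed-point matrix for
`A = 0`, `B = [[0,-1],[1,0]]` on `ℝ²` with `λ = 1/(2|δ|+2)`. -/
theorem gfrb_fixed_point_matrix_charpoly (δ : ℝ) :
    let l : ℝ := 1 / (2 * |δ| + 2)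
    let M : Matrix (Fin 6) (Fin 6) ℝ :=
      !![1, l * (δ + 2), 0, -(l * (2 * δ + 1)), 0, l * δ;
         -(l * (δ + 2)), 1, l * (2 * δ + 1), 0, -(l * δ), 0;
         1, 0, 0, 0, 0, 0;
         0, 1, 0, 0, 0, 0;
         0, 0, 1, 0, 0, 0;
         0, 0, 0, 1, 0, 0]
    M.charpoly =
      (X ^ 3 - X ^ 2) ^ 2 +
        C (l ^ 2) * (C (δ + 2) * X ^ 2 - C (2 * δ + 1) * X + C δ) ^ 2 := by
  intro l M
  rw [show M = rotationCompanion (l * (δ + 2)) (l * (2 * δ + 1)) (l * δ) from rfl,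
    charpoly_rotationCompanion]
  simp only [C_mul, C_pow]
  ring
end

section
/- The complex polynomial z³ − z² + (i/2)(2z² − z) factors as z·(z − (1−i)/2)²; consequently, the set of complex roots of the degree-6 polynomial (z³ − z²)² + (1/4)(2z² − z)² is exactly {0, (1+i)/2, (1−i)/2}, and every root has modulus at most 1/√2, with the roots (1±i)/2 having modulus exactly 1/√2. -/
/-!
With `a = z³ − z²` and `b = 2z² − z`, the sextic is `a² + (b/2)² = (a + i b/2)(a − i b/2)`, and each
of these conjugate cubics has a double root: `z (z − (1 ∓ i)/2)²`. So the roots are `0` and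
`(1 ± i)/2`, the latter of modulus `√2 / 2 = 1/√2`.
-/

open Complex

theorem cubic_eq_mul_sub_one_sub_I_div_two_sq (z : ℂ) :
    z ^ 3 - z ^ 2 + (I / 2) * (2 * z ^ 2 - z) = z * (z - (1 - I) / 2) ^ 2 := by
  linear_combination (-(z / 4)) * I_sq

theorem cubic_eq_mul_sub_one_add_I_div_two_sq (z : ℂ) :
    z ^ 3 - z ^ 2 - (I / 2) * (2 * z ^ 2 - z) = z * (z - (1 + I) / 2) ^ 2 := by
  linear_combination (-(z / 4)) * I_sq

theorem sextic_eq_mul (z : ℂ) :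
    (z ^ 3 - z ^ 2) ^ 2 + (1 / 4 : ℂ) * (2 * z ^ 2 - z) ^ 2
      = (z * (z - (1 - I) / 2) ^ 2) * (z * (z - (1 + I) / 2) ^ 2) := by
  rw [← cubic_eq_mul_sub_one_sub_I_div_two_sq, ← cubic_eq_mul_sub_one_add_I_div_two_sq]
  linear_combination ((2 * z ^ 2 - z) ^ 2 / 4) * I_sq

theorem sextic_eq_zero_iff (z : ℂ) :
    (z ^ 3 - z ^ 2) ^ 2 + (1 / 4 : ℂ) * (2 * z ^ 2 - z) ^ 2 = 0 ↔
      z ∈ ({0, (1 + I) / 2, (1 - I) / 2} : Set ℂ) := by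
  rw [sextic_eq_mul]
  simp only [mul_eq_zero, pow_eq_zero_iff two_ne_zero, sub_eq_zero, Set.mem_insert_iff,
    Set.mem_singleton_iff]
  tauto

theorem norm_one_add_I_div_two : ‖(1 + I) / 2‖ = 1 / Real.sqrt 2 := by
  have h : (1 + I : ℂ) = ((1 : ℝ) : ℂ) + ((1 : ℝ) : ℂ) * I := by push_cast; ring
  rw [norm_div, h, norm_add_mul_I, Complex.norm_two, ← Real.sqrt_div_self']
  norm_num

theorem norm_one_sub_I_div_two : ‖(1 - I) / 2‖ = 1 / Real.sqrt 2 := by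
  rw [← norm_one_add_I_div_two, ← norm_conj]
  simp [map_div₀, conj_ofNat]

/-- At `δ = 0`, `λ = 1/2`: the cubic factor factors as `z(z − (1−i)/2)²`,
the roots of the degree-6 characteristic polynomial are exactly
`{0, (1+i)/2, (1−i)/2}`, all of modulus at most `1/√2`, and the nonzero
roots have modulus exactly `1/√2`. -/
theorem frb_delta_zero_roots :
    (∀ z : ℂ, z ^ 3 - z ^ 2 + (I / 2) * (2 * z ^ 2 - z)
        = z * (z - (1 - I) / 2) ^ 2) ∧
    (∀ z : ℂ, (z ^ 3 - z ^ 2) ^ 2 + (1 / 4 : ℂ) * (2 * z ^ 2 - z) ^ 2 = 0 ↔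
        z ∈ ({0, (1 + I) / 2, (1 - I) / 2} : Set ℂ)) ∧
    (∀ z : ℂ, (z ^ 3 - z ^ 2) ^ 2 + (1 / 4 : ℂ) * (2 * z ^ 2 - z) ^ 2 = 0 →
        ‖z‖ ≤ 1 / Real.sqrt 2) ∧
    ‖(1 + I) / 2‖ = 1 / Real.sqrt 2 ∧
    ‖(1 - I) / 2‖ = 1 / Real.sqrt 2 := by
  refine ⟨cubic_eq_mul_sub_one_sub_I_div_two_sq, sextic_eq_zero_iff, ?_,
    norm_one_add_I_div_two, norm_one_sub_I_div_two⟩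
  intro z hz
  rcases (sextic_eq_zero_iff z).mp hz with rfl | rfl | rfl
  · simp
  · exact norm_one_add_I_div_two.le
  · exact norm_one_sub_I_div_two.le
end

section
/- Let δ > 0 and define the complex numbers a = −√2 + (√2(δ+2)/(2(δ+1)))·i, b = −((2δ+1)/(δ+1))·i, and c = (√2·δ/(δ+1))·i. Then (1 − |c|²)² − |a − b·conj(c)|² = −(3δ⁴ + 6δ³ + 5δ² + 12δ + 6)/(2(δ+1)⁴); in particular (1 − |c|²)² < |a − b·conj(c)|² for every δ > 0. -/
open Complex ComplexConjugate

/-!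
Since `b` and `c` are purely imaginary, `b * conj c` is real, so `D₂` is an explicit real
rational function of `δ` in which `√2` only occurs squared. Clearing denominators gives the
closed form, whose numerator has positive coefficients and is therefore positive for `δ > 0`.
-/

theorem schurCohnD2_of_imaginary_coeffs (a : ℂ) (β γ : ℝ) :
    (1 - ‖(γ : ℂ) * I‖ ^ 2) ^ 2 - ‖a - -((β : ℂ) * I) * conj ((γ : ℂ) * I)‖ ^ 2
      = (1 - γ ^ 2) ^ 2 - ((a.re + β * γ) ^ 2 + a.im ^ 2) := by
  simp only [Complex.sq_norm, normSq_apply, sub_re, sub_im, mul_re, mul_im, neg_re, neg_im,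
    conj_re, conj_im, ofReal_re, ofReal_im, I_re, I_im]
  ring

theorem gfrb_schurCohnD2_closed_form (δ : ℝ) (hδ : δ + 1 ≠ 0) :
    (1 - (√2 * δ / (δ + 1)) ^ 2) ^ 2
        - ((-√2 + (2 * δ + 1) / (δ + 1) * (√2 * δ / (δ + 1))) ^ 2
          + (√2 * (δ + 2) / (2 * (δ + 1))) ^ 2)
      = -(3 * δ ^ 4 + 6 * δ ^ 3 + 5 * δ ^ 2 + 12 * δ + 6) / (2 * (δ + 1) ^ 4) := by
  have hs : √2 ^ 2 = 2 := Real.sq_sqrt zero_le_two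
  simp only [div_pow, mul_pow, hs, ← mul_div_assoc]
  field_simp
  ring_nf
  rw [hs]
  ring

/-- Second Schur–Cohn determinant `D₂ = (1 − |c|²)² − |a − b·conj c|²` of the
rescaled cubic, for `δ > 0`: it is negative. -/
theorem schur_cohn_D2_pos_delta (δ : ℝ) (hδ : 0 < δ) :
    let a : ℂ := -(Real.sqrt 2 : ℝ) +
      (Real.sqrt 2 * (δ + 2) / (2 * (δ + 1)) : ℝ) * Complex.I
    let b : ℂ := -(((2 * δ + 1) / (δ + 1) : ℝ) * Complex.I)
    let c : ℂ := (Real.sqrt 2 * δ / (δ + 1) : ℝ) * Complex.I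
    (1 - ‖c‖ ^ 2) ^ 2 - ‖a - b * (starRingEnd ℂ) c‖ ^ 2
        = -(3 * δ ^ 4 + 6 * δ ^ 3 + 5 * δ ^ 2 + 12 * δ + 6) /
            (2 * (δ + 1) ^ 4) ∧
      (1 - ‖c‖ ^ 2) ^ 2 <
        ‖a - b * (starRingEnd ℂ) c‖ ^ 2 := by
  intro a b c
  have hD₂ : (1 - ‖c‖ ^ 2) ^ 2 - ‖a - b * conj c‖ ^ 2
      = -(3 * δ ^ 4 + 6 * δ ^ 3 + 5 * δ ^ 2 + 12 * δ + 6) / (2 * (δ + 1) ^ 4) := by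
    rw [schurCohnD2_of_imaginary_coeffs]
    simp only [a, add_re, add_im, neg_re, neg_im, mul_re, mul_im, ofReal_re, ofReal_im, I_re, I_im]
    convert gfrb_schurCohnD2_closed_form δ (by positivity) using 3 <;> ring
  refine ⟨hD₂, sub_neg.mp ?_⟩
  rw [hD₂, neg_div, neg_lt_zero]
  positivity
end

section
/- Let V be a real vector space and let (x_k)_{k≥0} be a sequence in V with x₁ = (1/5)·x₀, x₂ = (1/25)·x₀, and x_{k+1} = (122/285)·x_k + (122/285)·x_{k−1} − (27/285)·x_{k−2} for all k ≥ 2. Then x_k = (1/5^k)·x₀ for all k ≥ 0. -/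
theorem eq_pow_smul_of_linearRecurrence_three {R V : Type*} [CommSemiring R] [AddCommMonoid V]
    [Module R V] {a b c r : R} (hr : r ^ 3 = a * r ^ 2 + b * r + c) {x : ℕ → V}
    (h1 : x 1 = r • x 0) (h2 : x 2 = r ^ 2 • x 0)
    (hrec : ∀ k, x (k + 3) = a • x (k + 2) + b • x (k + 1) + c • x k) (k : ℕ) :
    x k = r ^ k • x 0 := by
  have window : ∀ k, x k = r ^ k • x 0 ∧ x (k + 1) = r ^ (k + 1) • x 0 ∧
      x (k + 2) = r ^ (k + 2) • x 0 := by
    intro k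
    induction k with
    | zero => exact ⟨by simp, by simpa using h1, h2⟩
    | succ k ih =>
      obtain ⟨hk, hk1, hk2⟩ := ih
      refine ⟨hk1, hk2, ?_⟩
      rw [hrec, hk, hk1, hk2, smul_smul, smul_smul, smul_smul, ← add_smul, ← add_smul]
      congr 1
      rw [show r ^ (k + 3) = r ^ k * r ^ 3 by ring, hr]
      ring
  exact (window k).1

/-- GFRB with `λ = 68/285`, `δ = 27/68` on `A = 0`, `B = I`: linear rate `1/5`. -/
theorem gfrb_rate_one_fifth {V : Type*} [AddCommGroup V] [Module ℝ V]
    (x : ℕ → V)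
    (h1 : x 1 = (1 / 5 : ℝ) • x 0)
    (h2 : x 2 = (1 / 25 : ℝ) • x 0)
    (hrec : ∀ k : ℕ, 2 ≤ k →
      x (k + 1) = (122 / 285 : ℝ) • x k + (122 / 285 : ℝ) • x (k - 1)
        - (27 / 285 : ℝ) • x (k - 2)) :
    ∀ k : ℕ, x k = (1 / 5 ^ k : ℝ) • x 0 := by
  have hrec' : ∀ k, x (k + 3) = (122 / 285 : ℝ) • x (k + 2) + (122 / 285 : ℝ) • x (k + 1)
      + (-27 / 285 : ℝ) • x k := by
    intro k
    rw [hrec (k + 2) (by omega), neg_div, neg_smul, ← sub_eq_add_neg]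
    rfl
  intro k
  rw [← one_div_pow]
  -- `1 / 5` is a root of the characteristic polynomial `285 t³ - 122 t² - 122 t + 27`.
  refine eq_pow_smul_of_linearRecurrence_three (by norm_num) h1 ?_ hrec' k
  rw [h2]
  norm_num
end

section
/- Let r ∈ ℝ with r ≠ 0, r ≠ 1, r² − r − 3 ≠ 0, and r² − r − 1 ≠ 0, and set δ = (r² + r − 3)/(r³ − 2r² − 2r + 3). Then δ + 1 ≠ 0, and for any real vector space V and any sequence (x_k)_{k≥0} in V with x₁ = (1/r)·x₀, x₂ = (1/r²)·x₀, and x_{k+1} = ((2δ+1)/(3(δ+1)))·x_k + ((2δ+1)/(3(δ+1)))·x_{k−1} − (δ/(3(δ+1)))·x_{k−2} for all k ≥ 2, one has x_k = (1/r^k)·x₀ for all k ≥ 0. -/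
/-!
The sequence `x k = r⁻ᵏ • x 0` solves a three-term linear recurrence as soon as `r⁻¹` is a root of
its characteristic polynomial and the initial values match. For the GFRB coefficients, clearing
denominators turns the characteristic equation at `r⁻¹` into `δ (r³ - 2r² - 2r + 3) = r² + r - 3`,
which is exactly how `δ` is chosen; `δ + 1 = r (r² - r - 1) / ((r - 1)(r² - r - 3))` is nonzero.
-/

theorem eq_pow_smul_of_recurrence_three {R V : Type*} [CommRing R] [AddCommGroup V] [Module R V]
    {a b c q : R} (hq : q ^ 3 = a * q ^ 2 + b * q + c) {x : ℕ → V}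
    (h1 : x 1 = q • x 0) (h2 : x 2 = q ^ 2 • x 0)
    (hrec : ∀ k, x (k + 3) = a • x (k + 2) + b • x (k + 1) + c • x k) (k : ℕ) :
    x k = q ^ k • x 0 := by
  suffices h : ∀ k, x k = q ^ k • x 0 ∧ x (k + 1) = q ^ (k + 1) • x 0 ∧
      x (k + 2) = q ^ (k + 2) • x 0 from (h k).1
  intro k
  induction k with
  | zero => exact ⟨by simp, by simpa using h1, h2⟩
  | succ k ih =>
    obtain ⟨h0, h1, h2⟩ := ih
    refine ⟨h1, h2, ?_⟩
    have hcoef : a * q ^ (k + 2) + b * q ^ (k + 1) + c * q ^ k = q ^ (k + 3) := by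
      linear_combination -q ^ k * hq
    rw [hrec, h0, h1, h2, smul_smul, smul_smul, smul_smul, ← add_smul, ← add_smul, hcoef]

section GFRB

variable {r δ : ℝ} (hr1 : r ≠ 1) (hr3 : r ^ 2 - r - 3 ≠ 0)
  (hδ : δ = (r ^ 2 + r - 3) / (r ^ 3 - 2 * r ^ 2 - 2 * r + 3))
include hr1 hr3 hδ

theorem gfrb_delta_mul_eq : δ * (r ^ 3 - 2 * r ^ 2 - 2 * r + 3) = r ^ 2 + r - 3 := by
  have hden : r ^ 3 - 2 * r ^ 2 - 2 * r + 3 ≠ 0 := by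
    rw [show r ^ 3 - 2 * r ^ 2 - 2 * r + 3 = (r - 1) * (r ^ 2 - r - 3) by ring]
    exact mul_ne_zero (sub_ne_zero.mpr hr1) hr3
  rw [hδ, div_mul_cancel₀ _ hden]

theorem gfrb_delta_add_one_ne_zero (hr0 : r ≠ 0) (hr2 : r ^ 2 - r - 1 ≠ 0) : δ + 1 ≠ 0 := by
  intro h
  have := gfrb_delta_mul_eq hr1 hr3 hδ
  rw [eq_neg_of_add_eq_zero_left h] at this
  exact mul_ne_zero hr0 hr2 (by linear_combination -this)

theorem gfrb_inv_char_eq (hr0 : r ≠ 0) (hδ1 : δ + 1 ≠ 0) :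
    (1 / r) ^ 3 = (2 * δ + 1) / (3 * (δ + 1)) * (1 / r) ^ 2
      + (2 * δ + 1) / (3 * (δ + 1)) * (1 / r) + -(δ / (3 * (δ + 1))) := by
  have := gfrb_delta_mul_eq hr1 hr3 hδ
  field_simp
  linear_combination this

end GFRB

/-- For any admissible rate `1/r`, the GFRB iteration with
`λ = 1/(3(δ+1))` and `δ = (r² + r − 3)/(r³ − 2r² − 2r + 3)` achieves it. -/
theorem gfrb_arbitrary_linear_rate (r : ℝ)
    (hr0 : r ≠ 0) (hr1 : r ≠ 1)
    (hr3 : r ^ 2 - r - 3 ≠ 0) (hr2 : r ^ 2 - r - 1 ≠ 0)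
    (δ : ℝ) (hδ : δ = (r ^ 2 + r - 3) / (r ^ 3 - 2 * r ^ 2 - 2 * r + 3)) :
    δ + 1 ≠ 0 ∧
      ∀ (V : Type*) [AddCommGroup V] [Module ℝ V] (x : ℕ → V),
        x 1 = (1 / r) • x 0 →
        x 2 = (1 / r ^ 2) • x 0 →
        (∀ k : ℕ, 2 ≤ k →
          x (k + 1) = ((2 * δ + 1) / (3 * (δ + 1))) • x k
            + ((2 * δ + 1) / (3 * (δ + 1))) • x (k - 1)
            - (δ / (3 * (δ + 1))) • x (k - 2)) →
        ∀ k : ℕ, x k = (1 / r ^ k) • x 0 := by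
  have hδ1 := gfrb_delta_add_one_ne_zero hr1 hr3 hδ hr0 hr2
  refine ⟨hδ1, fun V _ _ x h1 h2 hrec k => ?_⟩
  have hrec' : ∀ k, x (k + 3) = ((2 * δ + 1) / (3 * (δ + 1))) • x (k + 2)
      + ((2 * δ + 1) / (3 * (δ + 1))) • x (k + 1) + (-(δ / (3 * (δ + 1)))) • x k := fun k => by
    simpa [neg_smul, ← sub_eq_add_neg] using hrec (k + 2) (by omega)
  rw [← one_div_pow]
  exact eq_pow_smul_of_recurrence_three (gfrb_inv_char_eq hr1 hr3 hδ hr0 hδ1)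
    h1 (by rwa [one_div_pow]) hrec' k
end

section
/- Let H₁ and H₂ be finite-dimensional real inner product spaces, A : H₁ → Set H₁ and C : H₂ → Set H₂ maximally monotone set-valued operators, B : H₁ → H₁ a monotone L-Lipschitz map with L > 0, and K : H₁ → H₂ a linear map with adjoint K*. Let b ∈ ℝ and τ, σ > 0 satisfy 2τ(1 + |b|)L + τσ‖K‖² < 1, and suppose there exists (x̄, ȳ) ∈ H₁ × H₂ with −B x̄ − K* ȳ ∈ A x̄ and ȳ ∈ C(K x̄). Let (x_k)_{k≥0} in H₁ and (y_k)_{k≥0} in H₂ be sequences satisfying, for all k ≥ 2, the inclusions x_k − τK* y_k − (b+2)τ B x_k + (2b+1)τ B x_{k−1} − bτ B x_{k−2} − x_{k+1} ∈ τ A(x_{k+1}) and y_k + 2σK x_{k+1} − σK x_k − y_{k+1} ∈ σ C⁻¹(y_{k+1}). Then (x_k, y_k) converges to a point (x*, y*) ∈ H₁ × H₂ satisfying −B x* − K* y* ∈ A x* and y* ∈ C(K x*). -/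
/-!
The energy `epdtrEnergy s` of the paper (the weighted distance of the iterate to a primal–dual
solution `s`, corrected by the coupling term `⟪y - ȳ, K (x - x̄)⟫` and by the reflected
differences of `B`) decreases in each step by a fixed multiple of
`‖x_{k+1} - x_k‖² + ‖y_{k+1} - y_k‖²`: this combines the monotonicity of `A`, `B` and `C` at `s`
with Lipschitz continuity of `B` and Young's inequality for `K`. Under the step-size condition
the energy also dominates `‖x_k - x̄‖² + ‖y_k - ȳ‖²`. So the iterates are bounded with vanishing
increments; in finite dimensions a subsequence converges, its limit is again a solution because
graphs of maximally monotone operators are closed, and the energy centred at that limit is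
nonincreasing and tends to zero along the subsequence, hence along the whole sequence.
-/

open Filter Topology RealInnerProductSpace Pointwise
open scoped InnerProduct

section MonotoneOperator

variable {H : Type*} [NormedAddCommGroup H] [InnerProductSpace ℝ H]

def IsMonotoneOperator (A : H → Set H) : Prop :=
  ∀ x y u v : H, u ∈ A x → v ∈ A y → 0 ≤ ⟪u - v, x - y⟫

def IsMaximalMonotoneOperator (A : H → Set H) : Prop :=
  IsMonotoneOperator A ∧ ∀ A' : H → Set H, IsMonotoneOperator A' → (∀ x, A x ⊆ A' x) → A' = A

namespace IsMaximalMonotoneOperator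

variable {A : H → Set H}

theorem mem_of_forall_inner_nonneg (hA : IsMaximalMonotoneOperator A) {x u : H}
    (h : ∀ z w, w ∈ A z → 0 ≤ ⟪u - w, x - z⟫) : u ∈ A x := by
  set A' : H → Set H := fun z => A z ∪ {w | z = x ∧ w = u}
  have hA' : IsMonotoneOperator A' := by
    rintro p q r s (hr | ⟨rfl, rfl⟩) (hs | ⟨rfl, rfl⟩)
    · exact hA.1 p q r s hr hs
    · simpa only [← neg_sub r, ← neg_sub p, inner_neg_neg] using h p r hr
    · exact h q s hs
    · simp
  rw [← hA.2 A' hA' fun z => Set.subset_union_left]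
  exact Or.inr ⟨rfl, rfl⟩

theorem mem_of_tendsto (hA : IsMaximalMonotoneOperator A) {ι : Type*} {l : Filter ι} [l.NeBot]
    {p q : ι → H} {x u : H} (hmem : ∀ i, q i ∈ A (p i)) (hp : Tendsto p l (𝓝 x))
    (hq : Tendsto q l (𝓝 u)) : u ∈ A x :=
  hA.mem_of_forall_inner_nonneg fun z w hw =>
    ge_of_tendsto ((hq.sub_const w).inner (hp.sub_const z))
      (Eventually.of_forall fun i => hA.1 _ _ _ _ (hmem i) hw)

end IsMaximalMonotoneOperator

end MonotoneOperator

section Inequalities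

variable {E F : Type*} [NormedAddCommGroup E] [InnerProductSpace ℝ E]
  [NormedAddCommGroup F] [InnerProductSpace ℝ F]

theorem inner_apply_le_young (K : E →L[ℝ] F) (v : F) (w : E) {s t : ℝ} (hs : 0 < s)
    (ht : 0 < t) : ⟪v, K w⟫ ≤ s * ‖K‖ ^ 2 / (2 * t) * ‖w‖ ^ 2 + t / (2 * s) * ‖v‖ ^ 2 := by
  have hKw : ⟪v, K w⟫ ≤ ‖v‖ * (‖K‖ * ‖w‖) :=
    (real_inner_le_norm _ _).trans (mul_le_mul_of_nonneg_left (K.le_opNorm w) (norm_nonneg v))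
  have hsq : s * ‖K‖ ^ 2 / (2 * t) * ‖w‖ ^ 2 + t / (2 * s) * ‖v‖ ^ 2 - ‖v‖ * (‖K‖ * ‖w‖)
      = (s * ‖K‖ * ‖w‖ - t * ‖v‖) ^ 2 / (2 * s * t) := by
    field_simp
    ring
  have : 0 ≤ (s * ‖K‖ * ‖w‖ - t * ‖v‖) ^ 2 / (2 * s * t) := by positivity
  linarith

theorem abs_inner_le_of_norm_le_mul {a w : E} {L r : ℝ} (hL : 0 ≤ L) (ha : ‖a‖ ≤ L * r) :
    |⟪a, w⟫| ≤ L / 2 * (r ^ 2 + ‖w‖ ^ 2) := by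
  have := mul_nonneg hL (sq_nonneg (r - ‖w‖))
  calc |⟪a, w⟫| ≤ ‖a‖ * ‖w‖ := abs_real_inner_le_norm a w
    _ ≤ L * r * ‖w‖ := mul_le_mul_of_nonneg_right ha (norm_nonneg w)
    _ ≤ L / 2 * (r ^ 2 + ‖w‖ ^ 2) := by nlinarith

theorem min_mul_norm_sq_le {E F : Type*} [SeminormedAddCommGroup E] [SeminormedAddCommGroup F]
    {γ β : ℝ} (hγ : 0 ≤ γ) (hβ : 0 ≤ β) (u : E) (v : F) :
    min γ β * ‖(u, v)‖ ^ 2 ≤ γ * ‖u‖ ^ 2 + β * ‖v‖ ^ 2 := by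
  have hmax : ‖(u, v)‖ ^ 2 ≤ ‖u‖ ^ 2 + ‖v‖ ^ 2 := by
    rw [Prod.norm_mk]
    rcases le_total ‖u‖ ‖v‖ with h | h
    · rw [max_eq_right h]; nlinarith [sq_nonneg ‖u‖]
    · rw [max_eq_left h]; nlinarith [sq_nonneg ‖v‖]
  calc min γ β * ‖(u, v)‖ ^ 2 ≤ min γ β * (‖u‖ ^ 2 + ‖v‖ ^ 2) :=
        mul_le_mul_of_nonneg_left hmax (le_min hγ hβ)
    _ ≤ γ * ‖u‖ ^ 2 + β * ‖v‖ ^ 2 := by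
        nlinarith [min_le_left γ β, min_le_right γ β, sq_nonneg ‖u‖, sq_nonneg ‖v‖]

end Inequalities

theorem summable_of_add_le_succ {a d : ℕ → ℝ} (ha : ∀ k, 0 ≤ a k) (hd : ∀ k, 0 ≤ d k)
    (h : ∀ k, a (k + 1) + d k ≤ a k) : Summable d :=
  summable_of_sum_range_le hd fun n => by
    have := Finset.sum_le_sum fun k (_ : k ∈ Finset.range n) => le_sub_iff_add_le'.2 (h k)
    rw [Finset.sum_range_sub'] at this
    linarith [ha n]

theorem norm_le_sqrt_div_of_mul_norm_sq_le {E : Type*} [SeminormedAddCommGroup E] {v : E}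
    {c M : ℝ} (hc : 0 < c) (h : c * ‖v‖ ^ 2 ≤ M) : ‖v‖ ≤ √(M / c) := by
  rw [← abs_norm]
  exact Real.abs_le_sqrt ((le_div_iff₀' hc).2 h)

theorem tendsto_of_mul_norm_sq_le {E : Type*} [SeminormedAddCommGroup E] {ι : Type*}
    {l : Filter ι} {v : ι → E} {f : ι → ℝ} {p : E} {c : ℝ} (hc : 0 < c)
    (hf : Tendsto f l (𝓝 0)) (h : ∀ i, c * ‖v i - p‖ ^ 2 ≤ f i) : Tendsto v l (𝓝 p) := by
  rw [tendsto_iff_norm_sub_tendsto_zero]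
  exact squeeze_zero (fun i => norm_nonneg _)
    (fun i => norm_le_sqrt_div_of_mul_norm_sq_le hc (h i)) (by simpa using (hf.div_const c).sqrt)

theorem Filter.Tendsto.comp_add_of_tendsto_sub {G : Type*} [TopologicalSpace G]
    [AddCommGroup G] [IsTopologicalAddGroup G] {x : ℕ → G} {φ : ℕ → ℕ} {p : G} {i : ℕ}
    (hx : Tendsto (fun n => x (φ n + i)) atTop (𝓝 p))
    (hΔ : Tendsto (fun k => x (k + 1) - x k) atTop (𝓝 0)) (hφ : Tendsto φ atTop atTop)
    (j : ℕ) : Tendsto (fun n => x (φ n + j)) atTop (𝓝 p) := by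
  have hdrift : ∀ j, Tendsto (fun n => x (φ n + j) - x (φ n)) atTop (𝓝 0) := by
    intro j
    induction j with
    | zero => simpa using tendsto_const_nhds
    | succ j ih =>
      have hstep := hΔ.comp (tendsto_atTop_mono (fun n => Nat.le_add_right (φ n) j) hφ)
      simpa [← add_assoc] using hstep.add ih
  simpa using (hx.sub (hdrift i)).add (hdrift j)

theorem exists_tendsto_of_lyapunov {Z : Type*} [NormedAddCommGroup Z] [ProperSpace Z]
    {z : ℕ → Z} {S : Set Z} {V : Z → ℕ → ℝ} {c : ℝ} (hc : 0 < c) (hS : S.Nonempty)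
    (hlow : ∀ s ∈ S, ∀ k, c * ‖z k - s‖ ^ 2 ≤ V s k)
    (hdesc : ∀ s ∈ S, ∀ k, V s (k + 1) + c * ‖z (k + 1) - z k‖ ^ 2 ≤ V s k)
    (hcluster : Tendsto (fun k => z (k + 1) - z k) atTop (𝓝 0) → ∀ (p : Z) (φ : ℕ → ℕ),
      StrictMono φ → Tendsto (z ∘ φ) atTop (𝓝 p) → p ∈ S ∧ Tendsto (V p ∘ φ) atTop (𝓝 0)) :
    ∃ p ∈ S, Tendsto z atTop (𝓝 p) := by
  obtain ⟨s₀, hs₀⟩ := hS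
  have hV_nonneg : ∀ s ∈ S, ∀ k, 0 ≤ V s k := fun s hs k =>
    (by positivity : 0 ≤ c * ‖z k - s‖ ^ 2).trans (hlow s hs k)
  have hV_anti : ∀ s ∈ S, Antitone (V s) := fun s hs =>
    antitone_nat_of_succ_le fun k => by
      linarith [hdesc s hs k, (by positivity : 0 ≤ c * ‖z (k + 1) - z k‖ ^ 2)]
  have hΔ : Tendsto (fun k => z (k + 1) - z k) atTop (𝓝 0) := by
    have hsum :=
      summable_of_add_le_succ (hV_nonneg s₀ hs₀) (fun k => by positivity) (hdesc s₀ hs₀)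
    exact tendsto_of_mul_norm_sq_le hc hsum.tendsto_atTop_zero fun k => by rw [sub_zero]
  have hbdd : ∀ k, z k ∈ Metric.closedBall s₀ √(V s₀ 0 / c) := fun k => by
    rw [Metric.mem_closedBall, dist_eq_norm]
    exact norm_le_sqrt_div_of_mul_norm_sq_le hc
      ((hlow s₀ hs₀ k).trans (hV_anti s₀ hs₀ (Nat.zero_le k)))
  obtain ⟨p, -, φ, hφ, hzφ⟩ := tendsto_subseq_of_bounded Metric.isBounded_closedBall hbdd
  obtain ⟨hp, hVφ⟩ := hcluster hΔ p φ hφ hzφ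
  have hV : Tendsto (V p) atTop (𝓝 0) :=
    (tendsto_iff_tendsto_subseq_of_antitone (hV_anti p hp) hφ.tendsto_atTop).2 hVφ
  exact ⟨p, hp, tendsto_of_mul_norm_sq_le hc hV (hlow p hp)⟩

/-- `μ` is the weight in Young's inequality for the coupling term
`⟪y_{k+1} - y_k, K (x_{k+1} - x_k)⟫`. -/
theorem exists_epdtr_weight {τ a q : ℝ} (hτ : 0 < τ) (hq : 0 ≤ q) (h : 2 * τ * a + τ * q < 1) :
    ∃ μ : ℝ, 0 < μ ∧ μ < 1 ∧ 0 < 1 / (2 * τ) - q / (2 * μ) - a := by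
  have hD : 0 < 1 - 2 * τ * a := by nlinarith
  obtain ⟨μ, hlow, hμ1⟩ :=
    exists_between ((div_lt_one hD).2 (by linarith) : τ * q / (1 - 2 * τ * a) < 1)
  have hμ : 0 < μ := lt_of_le_of_lt (by positivity) hlow
  refine ⟨μ, hμ, hμ1, ?_⟩
  rw [div_lt_iff₀ hD] at hlow
  have : q / (2 * μ) < 1 / (2 * τ) - a := by
    rw [div_lt_iff₀ (by positivity)]
    field_simp
    nlinarith
  linarith

noncomputable section EPDTR

variable {H₁ H₂ : Type*} [NormedAddCommGroup H₁] [InnerProductSpace ℝ H₁]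
  [NormedAddCommGroup H₂] [InnerProductSpace ℝ H₂]
  (A : H₁ → Set H₁) (B : H₁ → H₁) (C : H₂ → Set H₂) (K : H₁ →L[ℝ] H₂) (b τ σ L : ℝ)

def epdtrDualResidual (x₂ x₃ : H₁) (y₂ y₃ : H₂) : H₂ :=
  σ⁻¹ • (y₂ - y₃) + K ((2 : ℝ) • x₃ - x₂)

/-- The Lyapunov function of the paper, centred at `s`, evaluated on the window
`(x₀, x₁, x₂, y₂) = (x_{k-2}, x_{k-1}, x_k, y_k)`. -/
def epdtrEnergy (s : H₁ × H₂) (x₀ x₁ x₂ : H₁) (y₂ : H₂) : ℝ :=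
  ‖x₂ - s.1‖ ^ 2 / (2 * τ) + ‖y₂ - s.2‖ ^ 2 / (2 * σ) - ⟪y₂ - s.2, K (x₂ - s.1)⟫
    - ⟪B x₂ - B x₁, x₂ - s.1⟫ + b * ⟪B x₁ - B x₀, x₂ - s.1⟫
    + (1 + |b|) * L / 2 * ‖x₂ - x₁‖ ^ 2 + |b| * L / 2 * ‖x₁ - x₀‖ ^ 2

variable {A B C K b τ σ L}

theorem mem_epdtrDualResidual_of_mem_smul (hσ : σ ≠ 0) {x₂ x₃ : H₁} {y₂ y₃ : H₂}
    (h : y₂ + (2 * σ) • K x₃ - σ • K x₂ - y₃ ∈ σ • {u | y₃ ∈ C u}) :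
    y₃ ∈ C (epdtrDualResidual K σ x₂ x₃ y₂ y₃) := by
  rw [Set.mem_smul_set_iff_inv_smul_mem₀ hσ, Set.mem_ofPred_eq] at h
  convert h using 2
  rw [epdtrDualResidual, map_sub, map_smul]
  match_scalars <;> field_simp

theorem le_epdtrEnergy (hLip : ∀ x y, ‖B x - B y‖ ≤ L * ‖x - y‖) (hL : 0 ≤ L) (hσ : 0 < σ)
    {μ : ℝ} (hμ : 0 < μ) (s : H₁ × H₂) (x₀ x₁ x₂ : H₁) (y₂ : H₂) :
    (1 / (2 * τ) - σ * ‖K‖ ^ 2 / (2 * μ) - (1 + |b|) * L) * ‖x₂ - s.1‖ ^ 2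
        + (1 - μ) / (2 * σ) * ‖y₂ - s.2‖ ^ 2
      ≤ epdtrEnergy B K b τ σ L s x₀ x₁ x₂ y₂ := by
  have hyoung := inner_apply_le_young K (y₂ - s.2) (x₂ - s.1) hσ hμ
  have hlip₁ := abs_le.1 (abs_inner_le_of_norm_le_mul (w := x₂ - s.1) hL (hLip x₂ x₁))
  have hlip₀ :
      |b * ⟪B x₁ - B x₀, x₂ - s.1⟫| ≤ |b| * (L / 2 * (‖x₁ - x₀‖ ^ 2 + ‖x₂ - s.1‖ ^ 2)) := by
    rw [abs_mul]
    exact mul_le_mul_of_nonneg_left (abs_inner_le_of_norm_le_mul hL (hLip x₁ x₀)) (abs_nonneg b)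
  have hpos₁ : 0 ≤ (1 + |b|) * L / 2 * ‖x₂ - s.1‖ ^ 2 := by positivity
  have hpos₂ : 0 ≤ |b| * L / 2 * ‖x₂ - x₁‖ ^ 2 := by positivity
  rw [epdtrEnergy]
  linear_combination hyoung + hlip₁.2 + (abs_le.1 hlip₀).1 + hpos₁ + hpos₂

theorem tendsto_epdtrEnergy_zero (hB : Continuous B) {ι : Type*} {l : Filter ι}
    {u₀ u₁ u₂ : ι → H₁} {v₂ : ι → H₂} {p : H₁ × H₂}
    (hu₀ : Tendsto u₀ l (𝓝 p.1)) (hu₁ : Tendsto u₁ l (𝓝 p.1)) (hu₂ : Tendsto u₂ l (𝓝 p.1))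
    (hv₂ : Tendsto v₂ l (𝓝 p.2)) :
    Tendsto (fun i => epdtrEnergy B K b τ σ L p (u₀ i) (u₁ i) (u₂ i) (v₂ i)) l (𝓝 0) := by
  have hcont : Continuous fun w : H₁ × H₁ × H₁ × H₂ =>
      epdtrEnergy B K b τ σ L p w.1 w.2.1 w.2.2.1 w.2.2.2 := by
    unfold epdtrEnergy
    fun_prop
  have h := (hcont.tendsto (p.1, p.1, p.1, p.2)).comp
    (hu₀.prodMk_nhds (hu₁.prodMk_nhds (hu₂.prodMk_nhds hv₂)))
  rwa [show epdtrEnergy B K b τ σ L p p.1 p.1 p.1 p.2 = 0 by simp [epdtrEnergy]] at h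

variable [CompleteSpace H₁] [CompleteSpace H₂]

variable (A B C K) in
def IsPrimalDualSolution (p : H₁ × H₂) : Prop :=
  -B p.1 - (K†) p.2 ∈ A p.1 ∧ p.2 ∈ C (K p.1)

variable (B K b τ) in
/-- The EPDTR updates say `epdtrPrimalResidual B K b τ x_{k-2} x_{k-1} x_k x_{k+1} y_k ∈ A x_{k+1}`
and `y_{k+1} ∈ C (epdtrDualResidual K σ x_k x_{k+1} y_k y_{k+1})`. -/
def epdtrPrimalResidual (x₀ x₁ x₂ x₃ : H₁) (y₂ : H₂) : H₁ :=
  τ⁻¹ • (x₂ - x₃) - (K†) y₂ - (b + 2) • B x₂ + (2 * b + 1) • B x₁ - b • B x₀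

theorem epdtrPrimalResidual_mem_of_mem_smul (hτ : τ ≠ 0) {x₀ x₁ x₂ x₃ : H₁} {y₂ : H₂}
    (h : x₂ - τ • (K†) y₂ - ((b + 2) * τ) • B x₂ + ((2 * b + 1) * τ) • B x₁ - (b * τ) • B x₀
      - x₃ ∈ τ • A x₃) :
    epdtrPrimalResidual B K b τ x₀ x₁ x₂ x₃ y₂ ∈ A x₃ := by
  rw [Set.mem_smul_set_iff_inv_smul_mem₀ hτ] at h
  convert h using 1
  rw [epdtrPrimalResidual]
  match_scalars <;> field_simp

theorem epdtrEnergy_succ_add_le (hA : IsMonotoneOperator A) (hC : IsMonotoneOperator C)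
    (hBmono : ∀ x y, 0 ≤ ⟪B x - B y, x - y⟫) (hLip : ∀ x y, ‖B x - B y‖ ≤ L * ‖x - y‖)
    (hL : 0 ≤ L) (hσ : 0 < σ) {μ : ℝ} (hμ : 0 < μ) {s : H₁ × H₂}
    (hs : IsPrimalDualSolution A B C K s) {x₀ x₁ x₂ x₃ : H₁} {y₂ y₃ : H₂}
    (hu : epdtrPrimalResidual B K b τ x₀ x₁ x₂ x₃ y₂ ∈ A x₃)
    (hv : y₃ ∈ C (epdtrDualResidual K σ x₂ x₃ y₂ y₃)) :
    epdtrEnergy B K b τ σ L s x₁ x₂ x₃ y₃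
        + (1 / (2 * τ) - σ * ‖K‖ ^ 2 / (2 * μ) - (1 + |b|) * L) * ‖x₃ - x₂‖ ^ 2
        + (1 - μ) / (2 * σ) * ‖y₃ - y₂‖ ^ 2
      ≤ epdtrEnergy B K b τ σ L s x₀ x₁ x₂ y₂ := by
  have hAs := hA _ _ _ _ hu hs.1
  have hCs := hC _ _ _ _ hv hs.2
  have hBs := hBmono x₃ s.1
  have hyoung := inner_apply_le_young K (y₃ - y₂) (x₃ - x₂) hσ hμ
  have hlip₁ := abs_le.1 (abs_inner_le_of_norm_le_mul (w := x₃ - x₂) hL (hLip x₂ x₁))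
  have hlip₀ :
      |b * ⟪B x₁ - B x₀, x₃ - x₂⟫| ≤ |b| * (L / 2 * (‖x₁ - x₀‖ ^ 2 + ‖x₃ - x₂‖ ^ 2)) := by
    rw [abs_mul]
    exact mul_le_mul_of_nonneg_left (abs_inner_le_of_norm_le_mul hL (hLip x₁ x₀)) (abs_nonneg b)
  have hlip₀' := abs_le.1 hlip₀
  -- Expanded into inner products of the points, the claim is the sum of the six facts above.
  simp only [epdtrPrimalResidual, epdtrDualResidual, epdtrEnergy, inner_sub_left, inner_sub_right,
    inner_add_left, inner_add_right, inner_neg_left, real_inner_smul_left,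
    real_inner_smul_right, map_sub, map_smul, ContinuousLinearMap.adjoint_inner_left,
    norm_sub_sq_real, real_inner_self_eq_norm_sq] at hAs hCs hBs hyoung hlip₁ hlip₀' ⊢
  simp only [real_inner_comm s.1, real_inner_comm s.2, real_inner_comm x₂ x₃]
    at hAs hCs hBs hyoung hlip₁ hlip₀' ⊢
  linear_combination hAs + hCs + hBs + hyoung + hlip₁.1 + hlip₀'.2

theorem isPrimalDualSolution_of_tendsto (hA : IsMaximalMonotoneOperator A)
    (hC : IsMaximalMonotoneOperator C) (hB : Continuous B) {ι : Type*} {l : Filter ι} [l.NeBot]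
    {u₀ u₁ u₂ u₃ : ι → H₁} {v₂ v₃ : ι → H₂} {p : H₁ × H₂}
    (hu : ∀ i, epdtrPrimalResidual B K b τ (u₀ i) (u₁ i) (u₂ i) (u₃ i) (v₂ i) ∈ A (u₃ i))
    (hv : ∀ i, v₃ i ∈ C (epdtrDualResidual K σ (u₂ i) (u₃ i) (v₂ i) (v₃ i)))
    (hu₀ : Tendsto u₀ l (𝓝 p.1)) (hu₁ : Tendsto u₁ l (𝓝 p.1)) (hu₂ : Tendsto u₂ l (𝓝 p.1))
    (hu₃ : Tendsto u₃ l (𝓝 p.1)) (hv₂ : Tendsto v₂ l (𝓝 p.2)) (hv₃ : Tendsto v₃ l (𝓝 p.2)) :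
    IsPrimalDualSolution A B C K p := by
  have hBu : ∀ {u : ι → H₁}, Tendsto u l (𝓝 p.1) → Tendsto (B ∘ u) l (𝓝 (B p.1)) :=
    fun hu => (hB.tendsto _).comp hu
  have hprimal := (((((hu₂.sub hu₃).const_smul τ⁻¹).sub
    (((K†).continuous.tendsto _).comp hv₂)).sub ((hBu hu₂).const_smul (b + 2))).add
    ((hBu hu₁).const_smul (2 * b + 1))).sub ((hBu hu₀).const_smul b)
  have hdual := ((hv₂.sub hv₃).const_smul σ⁻¹).add
    ((K.continuous.tendsto _).comp ((hu₃.const_smul (2 : ℝ)).sub hu₂))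
  rw [show τ⁻¹ • (p.1 - p.1) - (K†) p.2 - (b + 2) • B p.1 + (2 * b + 1) • B p.1 - b • B p.1
    = -B p.1 - (K†) p.2 by module] at hprimal
  rw [show σ⁻¹ • (p.2 - p.2) + K ((2 : ℝ) • p.1 - p.1) = K p.1 by simp [two_smul]] at hdual
  exact ⟨hA.mem_of_tendsto hu hu₃ hprimal, hC.mem_of_tendsto hv hdual hv₃⟩

theorem isPrimalDualSolution_and_tendsto_epdtrEnergy_of_subseq {x : ℕ → H₁} {y : ℕ → H₂}
    (hA : IsMaximalMonotoneOperator A) (hC : IsMaximalMonotoneOperator C) (hB : Continuous B)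
    (hu : ∀ k, epdtrPrimalResidual B K b τ (x k) (x (k + 1)) (x (k + 2)) (x (k + 3)) (y (k + 2))
      ∈ A (x (k + 3)))
    (hv : ∀ k,
      y (k + 3) ∈ C (epdtrDualResidual K σ (x (k + 2)) (x (k + 3)) (y (k + 2)) (y (k + 3))))
    (hΔ : Tendsto (fun k => (x (k + 3), y (k + 3)) - (x (k + 2), y (k + 2))) atTop (𝓝 0))
    {φ : ℕ → ℕ} (hφ : StrictMono φ) {p : H₁ × H₂}
    (hp : Tendsto (fun n => (x (φ n + 2), y (φ n + 2))) atTop (𝓝 p)) :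
    IsPrimalDualSolution A B C K p ∧ Tendsto (fun n => epdtrEnergy B K b τ σ L p
      (x (φ n)) (x (φ n + 1)) (x (φ n + 2)) (y (φ n + 2))) atTop (𝓝 0) := by
  have hΔx : Tendsto (fun k => x (k + 1) - x k) atTop (𝓝 0) :=
    (tendsto_add_atTop_iff_nat 2).1 ((continuous_fst.tendsto _).comp hΔ)
  have hΔy : Tendsto (fun k => y (k + 1) - y k) atTop (𝓝 0) :=
    (tendsto_add_atTop_iff_nat 2).1 ((continuous_snd.tendsto _).comp hΔ)
  have hx := ((continuous_fst.tendsto p).comp hp).comp_add_of_tendsto_sub hΔx hφ.tendsto_atTop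
  have hy := ((continuous_snd.tendsto p).comp hp).comp_add_of_tendsto_sub hΔy hφ.tendsto_atTop
  exact ⟨isPrimalDualSolution_of_tendsto hA hC hB (fun n => hu (φ n)) (fun n => hv (φ n))
      (hx 0) (hx 1) (hx 2) (hx 3) (hy 2) (hy 3),
    tendsto_epdtrEnergy_zero hB (hx 0) (hx 1) (hx 2) (hy 2)⟩

end EPDTR

/-- Convergence of the extended primal–dual twice-reflected algorithm (EPDTR)
for the inclusion `0 ∈ (A + B + K*CK)(x)` in finite dimensions. -/
theorem epdtr_convergence
    {H₁ : Type*} [NormedAddCommGroup H₁] [InnerProductSpace ℝ H₁]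
    [FiniteDimensional ℝ H₁]
    {H₂ : Type*} [NormedAddCommGroup H₂] [InnerProductSpace ℝ H₂]
    [FiniteDimensional ℝ H₂]
    (A : H₁ → Set H₁)
    (hAmono : ∀ x y u v : H₁, u ∈ A x → v ∈ A y → 0 ≤ ⟪u - v, x - y⟫)
    (hAmax : ∀ A' : H₁ → Set H₁,
      (∀ x y u v : H₁, u ∈ A' x → v ∈ A' y → 0 ≤ ⟪u - v, x - y⟫) →
      (∀ x : H₁, A x ⊆ A' x) → A' = A)
    (C : H₂ → Set H₂)
    (hCmono : ∀ x y u v : H₂, u ∈ C x → v ∈ C y → 0 ≤ ⟪u - v, x - y⟫)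
    (hCmax : ∀ C' : H₂ → Set H₂,
      (∀ x y u v : H₂, u ∈ C' x → v ∈ C' y → 0 ≤ ⟪u - v, x - y⟫) →
      (∀ x : H₂, C x ⊆ C' x) → C' = C)
    (B : H₁ → H₁) (L : ℝ) (hL : 0 < L)
    (hBmono : ∀ x y : H₁, 0 ≤ ⟪B x - B y, x - y⟫)
    (hLip : ∀ x y : H₁, ‖B x - B y‖ ≤ L * ‖x - y‖)
    (K : H₁ →L[ℝ] H₂)
    (b τ σ : ℝ) (hτ : 0 < τ) (hσ : 0 < σ)
    (hstep : 2 * τ * (1 + |b|) * L + τ * σ * ‖K‖ ^ 2 < 1)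
    (hsol : ∃ p : H₁ × H₂,
      -B p.1 - ContinuousLinearMap.adjoint K p.2 ∈ A p.1 ∧ p.2 ∈ C (K p.1))
    (x : ℕ → H₁) (y : ℕ → H₂)
    (hx : ∀ k : ℕ, 2 ≤ k →
      x k - τ • ContinuousLinearMap.adjoint K (y k)
          - ((b + 2) * τ) • B (x k) + ((2 * b + 1) * τ) • B (x (k - 1))
          - (b * τ) • B (x (k - 2)) - x (k + 1)
        ∈ τ • A (x (k + 1)))
    (hy : ∀ k : ℕ, 2 ≤ k →
      y k + (2 * σ) • K (x (k + 1)) - σ • K (x k) - y (k + 1)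
        ∈ σ • {u : H₂ | y (k + 1) ∈ C u}) :
    ∃ p : H₁ × H₂,
      -B p.1 - ContinuousLinearMap.adjoint K p.2 ∈ A p.1 ∧
      p.2 ∈ C (K p.1) ∧
      Tendsto (fun k => (x k, y k)) atTop (nhds p) := by
  obtain ⟨μ, hμ, hμ1, hγ⟩ := exists_epdtr_weight (a := (1 + |b|) * L) (q := σ * ‖K‖ ^ 2) hτ
    (by positivity) (by linarith)
  have hβ : 0 < (1 - μ) / (2 * σ) := div_pos (by linarith) (by positivity)
  have hB : Continuous B :=
    (LipschitzWith.of_dist_le' fun u v => by simpa only [dist_eq_norm] using hLip u v).continuous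
  have hu : ∀ k, epdtrPrimalResidual B K b τ (x k) (x (k + 1)) (x (k + 2)) (x (k + 3))
      (y (k + 2)) ∈ A (x (k + 3)) := fun k =>
    epdtrPrimalResidual_mem_of_mem_smul hτ.ne' (by simpa using hx (k + 2) (by omega))
  have hv : ∀ k, y (k + 3) ∈
      C (epdtrDualResidual K σ (x (k + 2)) (x (k + 3)) (y (k + 2)) (y (k + 3))) := fun k =>
    mem_epdtrDualResidual_of_mem_smul hσ.ne' (hy (k + 2) (by omega))
  -- Shifting indices by 2 keeps the window `x k, …, x (k + 3)` free of truncated subtraction.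
  obtain ⟨p, hp, hlim⟩ := exists_tendsto_of_lyapunov (z := fun k => (x (k + 2), y (k + 2)))
    (S := {s | IsPrimalDualSolution A B C K s})
    (V := fun s k => epdtrEnergy B K b τ σ L s (x k) (x (k + 1)) (x (k + 2)) (y (k + 2)))
    (lt_min hγ hβ) hsol
    (fun s _ k => (min_mul_norm_sq_le hγ.le hβ.le _ _).trans
      (le_epdtrEnergy hLip hL.le hσ hμ s _ _ _ _))
    (fun s hs k => by
      have := epdtrEnergy_succ_add_le hAmono hCmono hBmono hLip hL.le hσ hμ hs (hu k) (hv k)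
      simp only [add_assoc, Nat.reduceAdd, Prod.mk_sub_mk]
      linarith [min_mul_norm_sq_le hγ.le hβ.le (x (k + 3) - x (k + 2)) (y (k + 3) - y (k + 2))])
    (fun hΔ p φ hφ hp => isPrimalDualSolution_and_tendsto_epdtrEnergy_of_subseq
      ⟨hAmono, hAmax⟩ ⟨hCmono, hCmax⟩ hB hu hv hΔ hφ hp)
  exact ⟨p, hp.1, hp.2, (tendsto_add_atTop_iff_nat 2).1 hlim⟩
end
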